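/- Let p : Θ → ℝ^d be differentiable at θ with Jacobian ∇p(θ) ∈ ℝ^{d×k}, where p(θ) is always a probability vector, so 𝟙ᵀ ∇p(θ) = 0. Let ρ > 0, Σ_ρ(θ) = Diag(p(θ)) - p(θ)p(θ)ᵀ + (1/ρ)I_d, P = I_d - (1/d)𝟙𝟙ᵀ, C(θ) = P Σ_ρ(θ) P, M(θ) = Σ_ρ(θ)^{-1}, and Ȧ(θ) = P ∇p(θ). Then C(θ) M(θ) C(θ) = C(θ) and C(θ) M(θ) Ȧ(θ) = Ȧ(θ). -/

import Mathlib

/-!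
Write `𝟙` for the all-ones vector and `U = 𝟙𝟙ᵀ`. Since `p` sums to one, `Σ_ρ 𝟙 = 𝟙ᵀ Σ_ρ = ρ⁻¹ 𝟙`,
so `Σ_ρ` commutes with `U` and hence with the idempotent `P = I - d⁻¹ U`. It is positive definite,
being the covariance matrix `Diag(p) - p pᵀ` plus `ρ⁻¹ I`, so it is invertible, and then
`C M = P Σ_ρ P Σ_ρ⁻¹ = P`. Both identities follow from `P² = P`.
-/

open Matrix

namespace Matrix

variable {ι : Type*} [Fintype ι]

theorem commute_vecMulVec_of_mulVec_eq_zero {R : Type*} [CommSemiring R] {A : Matrix ι ι R}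
    {x y : ι → R} (hx : A *ᵥ x = 0) (hy : y ᵥ* A = 0) : Commute A (vecMulVec x y) := by
  rw [Commute, SemiconjBy, mul_vecMulVec, vecMulVec_mul, hx, hy, zero_vecMulVec, vecMulVec_zero]

theorem isIdempotentElem_one_sub_inv_card_smul_vecMulVec_one [DecidableEq ι] :
    IsIdempotentElem ((1 : Matrix ι ι ℝ) - (1 / (Fintype.card ι : ℝ)) • vecMulVec 1 1) := by
  set n : ℝ := (Fintype.card ι : ℝ)
  set U : Matrix ι ι ℝ := vecMulVec 1 1
  have hU : U * U = n • U := by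
    rw [vecMulVec_mul_vecMulVec, dotProduct_one, vecMulVec_smul]
    simp [U, n]
  have hn : 1 / n * (1 / n) * n = 1 / n := by
    rcases eq_or_ne n 0 with h | h
    · simp [h]
    · field_simp
  rw [IsIdempotentElem, sub_mul, mul_sub, mul_sub, smul_mul_smul, hU, smul_smul, hn]
  simp only [one_mul, mul_one, sub_self, sub_zero]

theorem mul_mul_mul_nonsing_inv_of_commute {K : Type*} [CommRing K] [DecidableEq ι]
    {S P : Matrix ι ι K} (hS : IsUnit S.det) (hP : IsIdempotentElem P) (hSP : Commute S P) :
    P * S * P * S⁻¹ = P := by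
  rw [mul_assoc P S P, hSP.eq, ← mul_assoc, hP.eq, mul_assoc, mul_nonsing_inv _ hS, mul_one]

variable [DecidableEq ι]

/-- The covariance matrix of the one-hot encoding of a categorical distribution `p`. -/
def multinomialCov (p : ι → ℝ) : Matrix ι ι ℝ := diagonal p - vecMulVec p p

theorem multinomialCov_mulVec_one {p : ι → ℝ} (hp : ∑ i, p i = 1) :
    multinomialCov p *ᵥ 1 = 0 := by
  ext i
  simp [multinomialCov, sub_mulVec, vecMulVec_mulVec, mulVec_diagonal, dotProduct, hp]

theorem one_vecMul_multinomialCov {p : ι → ℝ} (hp : ∑ i, p i = 1) :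
    1 ᵥ* multinomialCov p = 0 := by
  ext i
  simp [multinomialCov, vecMul_sub, vecMul_vecMulVec, vecMul_diagonal, dotProduct, hp]

omit [Fintype ι] in
theorem isHermitian_multinomialCov (p : ι → ℝ) : (multinomialCov p).IsHermitian := by
  simp [multinomialCov, IsHermitian]

theorem dotProduct_multinomialCov_mulVec {p : ι → ℝ} (hp : ∑ i, p i = 1) (x : ι → ℝ) :
    x ⬝ᵥ multinomialCov p *ᵥ x = ∑ i, p i * (x i - p ⬝ᵥ x) ^ 2 := by
  set m := p ⬝ᵥ x
  have hm : ∑ i, p i * x i = m := rfl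
  calc x ⬝ᵥ multinomialCov p *ᵥ x = ∑ i, p i * x i ^ 2 - m ^ 2 := by
        simp only [multinomialCov, sub_mulVec, vecMulVec_mulVec, dotProduct_sub]
        simp [dotProduct, mulVec_diagonal, sq, mul_left_comm, Finset.mul_sum, m, mul_comm]
    _ = ∑ i, (p i * x i ^ 2 - 2 * m * (p i * x i) + m ^ 2 * p i) := by
        rw [Finset.sum_add_distrib, Finset.sum_sub_distrib, ← Finset.mul_sum, ← Finset.mul_sum,
          hm, hp]
        ring
    _ = ∑ i, p i * (x i - m) ^ 2 := Finset.sum_congr rfl fun i _ => by ring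

theorem posSemidef_multinomialCov {p : ι → ℝ} (hp0 : ∀ i, 0 ≤ p i) (hp1 : ∑ i, p i = 1) :
    (multinomialCov p).PosSemidef :=
  .of_dotProduct_mulVec_nonneg (isHermitian_multinomialCov p) fun x => by
    rw [star_trivial, dotProduct_multinomialCov_mulVec hp1]
    exact Finset.sum_nonneg fun i _ => mul_nonneg (hp0 i) (sq_nonneg _)

end Matrix

theorem minchi_hypotheses_projected_general (d k : ℕ)
    (pθ : Fin d → ℝ) (hp0 : ∀ i, 0 ≤ pθ i) (hp1 : ∑ i, pθ i = 1)
    (J : Matrix (Fin d) (Fin k) ℝ)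
    (ρ : ℝ) (hρ : 0 < ρ) :
    let Sρ : Matrix (Fin d) (Fin d) ℝ :=
      Matrix.diagonal pθ - Matrix.vecMulVec pθ pθ + (1 / ρ) • (1 : Matrix (Fin d) (Fin d) ℝ)
    let P : Matrix (Fin d) (Fin d) ℝ :=
      1 - (1 / (d : ℝ)) • Matrix.vecMulVec (fun _ => 1) (fun _ => 1)
    let C : Matrix (Fin d) (Fin d) ℝ := P * Sρ * P
    let M : Matrix (Fin d) (Fin d) ℝ := Sρ⁻¹
    let A : Matrix (Fin d) (Fin k) ℝ := P * J
    C * M * C = C ∧ C * M * A = A := by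
  intro Sρ P C M A
  have hS : Sρ = multinomialCov pθ + (1 / ρ) • 1 := rfl
  have hSdet : IsUnit Sρ.det := by
    rw [← isUnit_iff_isUnit_det, hS]
    exact (PosDef.posSemidef_add (posSemidef_multinomialCov hp0 hp1)
      (.smul .one (by positivity))).isUnit
  have hP : IsIdempotentElem P := by
    have := isIdempotentElem_one_sub_inv_card_smul_vecMulVec_one (ι := Fin d)
    rwa [Fintype.card_fin] at this
  have hSP : Commute Sρ P := by
    have hSU : Commute Sρ (vecMulVec 1 1) := hS ▸ (commute_vecMulVec_of_mulVec_eq_zero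
      (multinomialCov_mulVec_one hp1) (one_vecMul_multinomialCov hp1)).add_left
      ((Commute.one_left _).smul_left _)
    exact (Commute.one_right _).sub_right (hSU.smul_right _)
  have hCM : C * M = P := mul_mul_mul_nonsing_inv_of_commute hSdet hP hSP
  refine ⟨?_, ?_⟩
  · rw [hCM]
    simp only [C, ← mul_assoc, hP.eq]
  · rw [hCM]
    simp only [A, ← Matrix.mul_assoc, hP.eq]

theorem minchi_hypotheses_projected (d k : ℕ) (hd : 0 < d)
    (pθ : Fin d → ℝ) (hp0 : ∀ i, 0 ≤ pθ i) (hp1 : ∑ i, pθ i = 1)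
    (J : Matrix (Fin d) (Fin k) ℝ) (hJ : ∀ j, ∑ i, J i j = 0)
    (ρ : ℝ) (hρ : 0 < ρ) :
    let Sρ : Matrix (Fin d) (Fin d) ℝ :=
      Matrix.diagonal pθ - Matrix.vecMulVec pθ pθ + (1 / ρ) • (1 : Matrix (Fin d) (Fin d) ℝ)
    let P : Matrix (Fin d) (Fin d) ℝ :=
      1 - (1 / (d : ℝ)) • Matrix.vecMulVec (fun _ => 1) (fun _ => 1)
    let C : Matrix (Fin d) (Fin d) ℝ := P * Sρ * P
    let M : Matrix (Fin d) (Fin d) ℝ := Sρ⁻¹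
    let A : Matrix (Fin d) (Fin k) ℝ := P * J
    C * M * C = C ∧ C * M * A = A :=
  minchi_hypotheses_projected_general d k pθ hp0 hp1 J ρ hρ
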